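/- Let Γ be a Gamma(τa, 1) random variable with τa > 0 and, conditionally on Γ, let Λ be Gaussian with mean γ̄a + μΓ and variance σ²Γ. Then E[Γ | Λ = λ] = (|λ − γ̄a| / √(2σ² + μ²)) · K_{τa + 1/2}(σ^{−2}|λ − γ̄a|√(2σ² + μ²)) / K_{τa − 1/2}(σ^{−2}|λ − γ̄a|√(2σ² + μ²)), whenever λ ≠ γ̄a. -/

import Mathlib

open MeasureTheory Real Set

noncomputable def besselK (ν x : ℝ) : ℝ :=
  ∫ t in Ioi (0 : ℝ), Real.exp (-x * Real.cosh t) * Real.cosh (ν * t)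

/-- Joint density of `(Λ, Γ)` at `(λ, g)` in the hierarchical model
`Γ ~ Gamma(τa, 1)`, `Λ | Γ = g ~ N(γ̄a + μg, σ²g)`. -/
noncomputable def jointDensity (τ a γbar μ σ lam g : ℝ) : ℝ :=
  Real.exp (-(lam - γbar * a - μ * g) ^ 2 / (2 * σ ^ 2 * g)) /
      Real.sqrt (2 * π * σ ^ 2 * g) *
    (g ^ (τ * a - 1) * Real.exp (-g) / Real.Gamma (τ * a))

/-- The conditional expectation `E[Γ | Λ = λ]`, computed as
`∫ g π(λ|g)π(g) dg / ∫ π(λ|g)π(g) dg`. -/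
noncomputable def condMeanGamma (τ a γbar μ σ lam : ℝ) : ℝ :=
  (∫ g in Ioi (0 : ℝ), g * jointDensity τ a γbar μ σ lam g) /
    ∫ g in Ioi (0 : ℝ), jointDensity τ a γbar μ σ lam g

/-! For fixed `λ`, the joint density is, up to a factor not depending on `g`, the generalised
inverse Gaussian kernel `g ^ (ν - 1) * exp (-(α g + β / g))` with `ν = τa - 1/2`,
`α = (2σ² + μ²) / (2σ²)` and `β = (λ - γ̄a)² / (2σ²)`. Substituting `g = √(β/α) eᵗ` turns its
integral into `2 √(β/α) ^ ν K_ν(2√(αβ))`, and the extra factor `g` in the numerator raises `ν`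
by one, so the conditional mean is `√(β/α) K_{ν+1}(2√(αβ)) / K_ν(2√(αβ))`. -/

lemma sq_div_four_le_cosh (t : ℝ) : t ^ 2 / 4 ≤ cosh t := by
  rw [← cosh_abs, cosh_eq]
  nlinarith [quadratic_le_exp_of_nonneg (abs_nonneg t), exp_pos (-|t|), sq_abs t, abs_nonneg t]

lemma integrable_exp_mul_sub_mul_cosh (ν : ℝ) {x : ℝ} (hx : 0 < x) :
    Integrable fun t : ℝ => exp (ν * t - x * cosh t) := by
  refine ((integrable_exp_neg_mul_sq (b := x / 8) (by positivity)).const_mul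
    (exp (2 * ν ^ 2 / x))).mono' (by fun_prop) (ae_of_all _ fun t => ?_)
  rw [norm_of_nonneg (exp_pos _).le, ← exp_add, exp_le_exp]
  have hsq : 0 ≤ (x * t - 4 * ν) ^ 2 / (8 * x) := by positivity
  have hcosh := mul_le_mul_of_nonneg_left (sq_div_four_le_cosh t) hx.le
  calc ν * t - x * cosh t ≤ ν * t - x * (t ^ 2 / 4) := by linarith
    _ ≤ ν * t - x * (t ^ 2 / 4) + (x * t - 4 * ν) ^ 2 / (8 * x) := by linarith
    _ = 2 * ν ^ 2 / x + -(x / 8) * t ^ 2 := by field_simp; ring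

lemma integral_exp_mul_sub_mul_cosh (ν : ℝ) {x : ℝ} (hx : 0 < x) :
    ∫ t : ℝ, exp (ν * t - x * cosh t) = 2 * besselK ν x := by
  have hflip : ∫ t : ℝ, exp (ν * t - x * cosh t) = ∫ t : ℝ, exp (-ν * t - x * cosh t) := by
    rw [← integral_neg_eq_self]
    simp only [cosh_neg, mul_neg, neg_mul]
  have heven : ∫ t : ℝ, exp (-x * cosh t) * cosh (ν * t) = 2 * besselK ν x := by
    rw [besselK, ← integral_comp_abs]
    congr 1 with t
    rcases abs_choice t with h | h <;> simp only [h, mul_neg, cosh_neg]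
  have hsum : ∀ t : ℝ, exp (ν * t - x * cosh t) + exp (-ν * t - x * cosh t)
      = 2 * (exp (-x * cosh t) * cosh (ν * t)) := fun t => by
    rw [cosh_eq (ν * t), show ν * t - x * cosh t = -x * cosh t + ν * t by ring,
      show -ν * t - x * cosh t = -x * cosh t + -(ν * t) by ring, exp_add, exp_add]
    ring
  have := integral_add (integrable_exp_mul_sub_mul_cosh ν hx)
    (integrable_exp_mul_sub_mul_cosh (-ν) hx)
  simp only [hsum, integral_const_mul, heven, ← hflip] at this
  linarith

theorem integral_comp_exp {E : Type*} [NormedAddCommGroup E] [NormedSpace ℝ E] (f : ℝ → E) :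
    ∫ t : ℝ, exp t • f (exp t) = ∫ g in Ioi 0, f g := by
  rw [← range_exp, ← image_univ, integral_image_eq_integral_abs_deriv_smul MeasurableSet.univ
    (fun t _ => (hasDerivAt_exp t).hasDerivWithinAt) exp_injective.injOn, setIntegral_univ]
  simp only [abs_of_pos (exp_pos _)]

/-- Unnormalised density of the generalised inverse Gaussian law. -/
noncomputable def gigKernel (ν α β g : ℝ) : ℝ := g ^ (ν - 1) * exp (-(α * g + β / g))

lemma integral_gigKernel_eq_integral_exp (ν α β : ℝ) :
    ∫ g in Ioi 0, gigKernel ν α β g = ∫ t : ℝ, exp (ν * t - (α * exp t + β * exp (-t))) := by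
  rw [← integral_comp_exp]
  congr 1 with t
  rw [smul_eq_mul, gigKernel, ← exp_mul, exp_neg t, ← div_eq_mul_inv, ← exp_add, ← exp_add]
  ring_nf

lemma integral_exp_mul_sub_exp_add_exp (ν : ℝ) {α β : ℝ} (hα : 0 < α) (hβ : 0 < β) :
    ∫ t : ℝ, exp (ν * t - (α * exp t + β * exp (-t)))
      = √(β / α) ^ ν * ∫ t : ℝ, exp (ν * t - 2 * √(α * β) * cosh t) := by
  set s := √(β / α)
  have hs : 0 < s := by positivity
  have hss : α * (s * s) = β := by rw [mul_self_sqrt (by positivity)]; field_simp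
  have hαs : α * s = √(α * β) := by
    rw [eq_comm, sqrt_eq_iff_mul_self_eq_of_pos (by positivity)]
    linear_combination α * hss
  have hβs : β / s = √(α * β) := by
    rw [eq_comm, sqrt_eq_iff_mul_self_eq_of_pos (by positivity)]
    field_simp
    linear_combination -hss
  -- translating `t` by `log s` balances the coefficients of `exp t` and `exp (-t)`
  rw [← integral_add_right_eq_self _ (log s), ← integral_const_mul]
  congr 1 with t
  rw [rpow_def_of_pos hs, ← exp_add]
  congr 1
  rw [exp_add, neg_add, exp_add, exp_neg (log s), exp_log hs, cosh_eq]
  linear_combination (-exp t) * hαs + (-exp (-t)) * hβs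

theorem integral_gigKernel (ν : ℝ) {α β : ℝ} (hα : 0 < α) (hβ : 0 < β) :
    ∫ g in Ioi 0, gigKernel ν α β g = 2 * √(β / α) ^ ν * besselK ν (2 * √(α * β)) := by
  rw [integral_gigKernel_eq_integral_exp, integral_exp_mul_sub_exp_add_exp ν hα hβ,
    integral_exp_mul_sub_mul_cosh ν (by positivity)]
  ring

lemma integral_mul_gigKernel (ν α β : ℝ) :
    ∫ g in Ioi 0, g * gigKernel ν α β g = ∫ g in Ioi 0, gigKernel (ν + 1) α β g := by
  refine setIntegral_congr_fun measurableSet_Ioi fun g (hg : 0 < g) => ?_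
  rw [gigKernel, gigKernel, add_sub_cancel_right, rpow_sub_one hg.ne']
  field_simp

theorem integral_mul_gigKernel_div_integral_gigKernel (ν : ℝ) {α β : ℝ} (hα : 0 < α)
    (hβ : 0 < β) :
    (∫ g in Ioi 0, g * gigKernel ν α β g) / ∫ g in Ioi 0, gigKernel ν α β g
      = √(β / α) * (besselK (ν + 1) (2 * √(α * β)) / besselK ν (2 * √(α * β))) := by
  have hs : 0 < √(β / α) := by positivity
  rw [integral_mul_gigKernel, integral_gigKernel _ hα hβ, integral_gigKernel _ hα hβ,
    rpow_add_one hs.ne']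
  field_simp

lemma jointDensity_eq_mul_gigKernel (τ a γbar μ : ℝ) {σ g : ℝ} (hσ : σ ≠ 0) (hg : 0 < g)
    (lam : ℝ) :
    jointDensity τ a γbar μ σ lam g
      = exp ((lam - γbar * a) * μ / σ ^ 2) / (√(2 * π * σ ^ 2) * Gamma (τ * a)) *
          gigKernel (τ * a - 1 / 2) ((2 * σ ^ 2 + μ ^ 2) / (2 * σ ^ 2))
            ((lam - γbar * a) ^ 2 / (2 * σ ^ 2)) g := by
  have hexp : -(lam - γbar * a - μ * g) ^ 2 / (2 * σ ^ 2 * g) + -g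
      = (lam - γbar * a) * μ / σ ^ 2 + -((2 * σ ^ 2 + μ ^ 2) / (2 * σ ^ 2) * g
          + (lam - γbar * a) ^ 2 / (2 * σ ^ 2) / g) := by
    field_simp
    ring
  have hpow : g ^ (τ * a - 1 / 2 - 1) = g ^ (τ * a - 1) / √g := by
    rw [sqrt_eq_rpow, ← rpow_sub hg]
    ring_nf
  have hexp' := congrArg exp hexp
  rw [exp_add, exp_add] at hexp'
  rw [jointDensity, gigKernel, hpow, sqrt_mul (by positivity) g]
  linear_combination g ^ (τ * a - 1) / (√(2 * π * σ ^ 2) * √g * Gamma (τ * a)) * hexp'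

lemma condMeanGamma_eq_div_integral_gigKernel (τ a γbar μ : ℝ) {σ : ℝ} (hσ : σ ≠ 0)
    (hΓ : Gamma (τ * a) ≠ 0) (lam : ℝ) :
    condMeanGamma τ a γbar μ σ lam
      = (∫ g in Ioi 0, g * gigKernel (τ * a - 1 / 2) ((2 * σ ^ 2 + μ ^ 2) / (2 * σ ^ 2))
            ((lam - γbar * a) ^ 2 / (2 * σ ^ 2)) g) /
          ∫ g in Ioi 0, gigKernel (τ * a - 1 / 2) ((2 * σ ^ 2 + μ ^ 2) / (2 * σ ^ 2))
            ((lam - γbar * a) ^ 2 / (2 * σ ^ 2)) g := by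
  set C := exp ((lam - γbar * a) * μ / σ ^ 2) / (√(2 * π * σ ^ 2) * Gamma (τ * a))
  have hC : C ≠ 0 := by
    have : 0 < 2 * π * σ ^ 2 := by positivity
    positivity
  rw [← mul_div_mul_left _ _ hC, ← integral_const_mul, ← integral_const_mul, condMeanGamma]
  congr 1 <;> refine setIntegral_congr_fun measurableSet_Ioi fun g (hg : 0 < g) => ?_ <;>
    rw [jointDensity_eq_mul_gigKernel τ a γbar μ hσ hg]
  ring

/-- Closed form for `E[Γ | Λ = λ]` in terms of modified Bessel functions of the
second kind. -/
theorem condMeanGamma_eq_besselK (τ a γbar μ σ lam : ℝ)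
    (hτ : 0 < τ) (ha : 0 < a) (hσ : 0 < σ) (hlam : lam ≠ γbar * a) :
    condMeanGamma τ a γbar μ σ lam
      = |lam - γbar * a| / Real.sqrt (2 * σ ^ 2 + μ ^ 2) *
          (besselK (τ * a + 1 / 2)
              (σ ^ (-2 : ℤ) * |lam - γbar * a| * Real.sqrt (2 * σ ^ 2 + μ ^ 2)) /
            besselK (τ * a - 1 / 2)
              (σ ^ (-2 : ℤ) * |lam - γbar * a| * Real.sqrt (2 * σ ^ 2 + μ ^ 2))) := by
  set c := lam - γbar * a
  have hc : c ≠ 0 := sub_ne_zero.2 hlam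
  have hα : 0 < (2 * σ ^ 2 + μ ^ 2) / (2 * σ ^ 2) := by positivity
  have hβ : 0 < c ^ 2 / (2 * σ ^ 2) := by positivity
  have hscale : √(c ^ 2 / (2 * σ ^ 2) / ((2 * σ ^ 2 + μ ^ 2) / (2 * σ ^ 2)))
      = |c| / √(2 * σ ^ 2 + μ ^ 2) := by
    rw [div_div_div_cancel_right₀ (by positivity), sqrt_div (sq_nonneg c), sqrt_sq_eq_abs]
  have hargument : 2 * √((2 * σ ^ 2 + μ ^ 2) / (2 * σ ^ 2) * (c ^ 2 / (2 * σ ^ 2)))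
      = σ ^ (-2 : ℤ) * |c| * √(2 * σ ^ 2 + μ ^ 2) := by
    have hsq : (2 * σ ^ 2 + μ ^ 2) / (2 * σ ^ 2) * (c ^ 2 / (2 * σ ^ 2))
        = (|c| * √(2 * σ ^ 2 + μ ^ 2) / (2 * σ ^ 2)) ^ 2 := by
      rw [div_pow, mul_pow, sq_abs, sq_sqrt (by positivity)]
      ring
    rw [hsq, sqrt_sq (by positivity), zpow_neg, zpow_ofNat]
    field_simp
  have hΓ : Gamma (τ * a) ≠ 0 := (Gamma_pos_of_pos (by positivity)).ne'
  rw [condMeanGamma_eq_div_integral_gigKernel τ a γbar μ hσ.ne' hΓ,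
    integral_mul_gigKernel_div_integral_gigKernel _ hα hβ, hscale, hargument,
    show τ * a - 1 / 2 + 1 = τ * a + 1 / 2 by ring]
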